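/- Let K be a (skew) field, γ: K → K a ring automorphism, and f ∈ K_γ[t^{±1}] a nonzero element. Then deg(f) equals the dimension of the quotient K_γ[t^{±1}]/f·K_γ[t^{±1}] as a right K-vector space. -/

import Mathlib

/-- A model of the skew Laurent polynomial ring `K_γ[t^{±1}]`: a ring `R` together with
an embedding `ι : K → R`, a unit `t` satisfying `t * ι a = ι (γ a) * t`, such that the
elements `ι a * t^i` form a basis, i.e. every element of `R` is uniquely a finite sum
`∑ ι aᵢ * t^i`. -/
structure SkewLaurent (K : Type) [DivisionRing K] (γ : K ≃+* K) (R : Type) [Ring R] where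
  ι : K →+* R
  t : Rˣ
  tcomm : ∀ a : K, (t : R) * ι a = ι (γ a) * (t : R)
  repr : (ℤ →₀ K) ≃+ R
  repr_single : ∀ (i : ℤ) (a : K), repr (Finsupp.single i a) = ι a * ((t ^ i : Rˣ) : R)

namespace SkewLaurent
variable {K : Type} [DivisionRing K] {γ : K ≃+* K} {R : Type} [Ring R]

/-- The degree `n - m` of a nonzero skew Laurent polynomial `∑_{i=m}^n aᵢ t^i`
(with `a_m ≠ 0`, `a_n ≠ 0`); junk value `0` for `f = 0`. -/
noncomputable def deg (S : SkewLaurent K γ R) (f : R) : ℤ :=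
  if h : (S.repr.symm f).support.Nonempty then
    (S.repr.symm f).support.max' h - (S.repr.symm f).support.min' h
  else 0

end SkewLaurent

/-!
Let `m ≤ n` be the lowest and highest exponents of `f`. Leading coefficients multiply (up to a
twist by a power of `γ`), and so do trailing ones, so every nonzero multiple `f * r` has degree at
least `deg f = n - m`: no nonzero right `K`-combination of `t ^ m, …, t ^ (n - 1)` lies in `f R`.
Conversely, a term `t ^ k` with `k ≥ n` (resp. `k < m`) is, modulo `f * t ^ (k - n)`
(resp. `f * t ^ (k - m)`), a combination of powers strictly closer to `[m, n)`, so the classes of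
`t ^ m, …, t ^ (n - 1)` span the quotient. They thus form a basis with `n - m` elements.
-/

open Finsupp Submodule

theorem Module.Basis.mem_span_image_erase_of_map_eq_zero {ι D M N : Type*} [DecidableEq ι]
    [DivisionRing D] [AddCommGroup M] [Module D M] [AddCommGroup N] [Module D N]
    (b : Module.Basis ι D M) (q : M →ₗ[D] N) {y : M} (hy : q y = 0) {k : ι}
    (hk : b.repr y k ≠ 0) :
    q (b k) ∈ span D ((q ∘ b) '' ↑((b.repr y).support.erase k)) := by
  have hsum := hy
  rw [← b.linearCombination_repr y, Finsupp.linearCombination_apply, Finsupp.sum, map_sum,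
    ← Finset.add_sum_erase _ _ (Finsupp.mem_support_iff.mpr hk)] at hsum
  simp only [map_smul] at hsum
  rw [← Submodule.smul_mem_iff _ hk, eq_neg_of_add_eq_zero_left hsum]
  exact neg_mem (sum_mem fun l hl => smul_mem _ _ (subset_span ⟨l, hl, rfl⟩))

namespace SkewLaurent
variable {K : Type} [DivisionRing K] {γ : K ≃+* K} {R : Type} [Ring R] (S : SkewLaurent K γ R)

theorem semiconjBy_t_zpow (i : ℤ) (a : K) :
    SemiconjBy ((S.t ^ i : Rˣ) : R) (S.ι a) (S.ι ((γ ^ i) a)) := by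
  induction i using Int.induction_on generalizing a with
  | zero => simp [SemiconjBy]
  | succ i ih =>
    rw [zpow_add_one, zpow_add_one, Units.val_mul, RingAut.mul_apply]
    exact (ih (γ a)).mul_left (S.tcomm a)
  | pred i ih =>
    have ht : SemiconjBy ((S.t⁻¹ : Rˣ) : R) (S.ι a) (S.ι (γ⁻¹ a)) := by
      refine SemiconjBy.units_inv_symm_left ?_
      simpa [SemiconjBy] using S.tcomm (γ⁻¹ a)
    rw [zpow_sub_one, zpow_sub_one, Units.val_mul, RingAut.mul_apply]
    exact (ih (γ⁻¹ a)).mul_left ht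

theorem t_zpow_eq_repr_single (i : ℤ) : ((S.t ^ i : Rˣ) : R) = S.repr (single i 1) := by
  rw [S.repr_single, map_one, one_mul]

theorem repr_single_mul_repr_single (i j : ℤ) (a b : K) :
    S.repr (single i a) * S.repr (single j b) = S.repr (single (i + j) (a * (γ ^ i) b)) := by
  rw [S.repr_single, S.repr_single, S.repr_single, zpow_add, Units.val_mul, map_mul, mul_assoc,
    ← mul_assoc _ (S.ι b), S.semiconjBy_t_zpow i b, mul_assoc, mul_assoc]

theorem repr_symm_mul_repr_apply (x : R) (v : ℤ →₀ K) (k : ℤ) :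
    S.repr.symm (x * S.repr v) k = v.sum fun j b => S.repr.symm x (k - j) * (γ ^ (k - j)) b := by
  induction v using Finsupp.induction_linear with
  | zero => simp
  | add v w hv hw =>
    rw [map_add, mul_add, map_add, Finsupp.add_apply, hv, hw,
      Finsupp.sum_add_index' (fun _ => by simp) (fun _ _ _ => by rw [map_add, mul_add])]
  | single j b =>
    rw [sum_single_index (by simp)]
    obtain ⟨u, rfl⟩ := S.repr.surjective x
    induction u using Finsupp.induction_linear with
    | zero => simp
    | add u w hu hw => simp only [map_add, add_mul, Finsupp.add_apply, hu, hw]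
    | single i a =>
      rw [repr_single_mul_repr_single, AddEquiv.symm_apply_apply, AddEquiv.symm_apply_apply]
      by_cases h : i = k - j
      · subst h; simp
      · rw [single_eq_of_ne (by omega), single_eq_of_ne (by omega), zero_mul]

theorem repr_symm_mul_t_zpow_apply (x : R) (j k : ℤ) :
    S.repr.symm (x * ((S.t ^ j : Rˣ) : R)) k = S.repr.symm x (k - j) := by
  rw [t_zpow_eq_repr_single, repr_symm_mul_repr_apply, sum_single_index (by simp), map_one, mul_one]

theorem support_repr_symm_nonempty {x : R} (hx : x ≠ 0) : (S.repr.symm x).support.Nonempty :=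
  Finsupp.support_nonempty_iff.mpr (by simpa using hx)

theorem exists_isLeast_isGreatest {x : R} (hx : x ≠ 0) :
    ∃ m n : ℤ, IsLeast ↑(S.repr.symm x).support m ∧ IsGreatest ↑(S.repr.symm x).support n :=
  have hne := S.support_repr_symm_nonempty hx
  ⟨_, _, Finset.isLeast_min' _ hne, Finset.isGreatest_max' _ hne⟩

theorem deg_eq_sub {x : R} {m n : ℤ} (hm : IsLeast ↑(S.repr.symm x).support m)
    (hn : IsGreatest ↑(S.repr.symm x).support n) : S.deg x = n - m := by
  have hne : (S.repr.symm x).support.Nonempty := ⟨n, hn.1⟩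
  rw [deg, dif_pos hne, (Finset.isGreatest_max' _ hne).unique hn,
    (Finset.isLeast_min' _ hne).unique hm]

theorem sub_le_deg {x : R} {k l : ℤ} (hk : k ∈ (S.repr.symm x).support)
    (hl : l ∈ (S.repr.symm x).support) : k - l ≤ S.deg x := by
  have hne : (S.repr.symm x).support.Nonempty := ⟨k, hk⟩
  rw [deg, dif_pos hne]
  exact sub_le_sub (Finset.le_max' _ _ hk) (Finset.min'_le _ _ hl)

theorem deg_lt_of_support_subset_Ico {x : R} (hx : x ≠ 0) {m n : ℤ}
    (h : ↑(S.repr.symm x).support ⊆ Set.Ico m n) : S.deg x < n - m := by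
  have hne := S.support_repr_symm_nonempty hx
  have hmax := h (Finset.max'_mem _ hne)
  have hmin := h (Finset.min'_mem _ hne)
  rw [deg, dif_pos hne]
  linarith [hmax.2, hmin.1]

theorem repr_symm_mul_apply_add_of_isGreatest {x y : R} {n N : ℤ}
    (hx : IsGreatest ↑(S.repr.symm x).support n) (hy : IsGreatest ↑(S.repr.symm y).support N) :
    S.repr.symm (x * y) (n + N) = S.repr.symm x n * (γ ^ n) (S.repr.symm y N) := by
  rw [← S.repr.apply_symm_apply y, repr_symm_mul_repr_apply, AddEquiv.apply_symm_apply,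
    Finsupp.sum, Finset.sum_eq_single_of_mem N hy.1, add_sub_cancel_right]
  intro j hj hjN
  have hxz : S.repr.symm x (n + N - j) = 0 :=
    Finsupp.notMem_support_iff.mp fun h => by have := hx.2 h; have := hy.2 hj; omega
  rw [hxz, zero_mul]

theorem repr_symm_mul_apply_add_of_isLeast {x y : R} {m M : ℤ}
    (hx : IsLeast ↑(S.repr.symm x).support m) (hy : IsLeast ↑(S.repr.symm y).support M) :
    S.repr.symm (x * y) (m + M) = S.repr.symm x m * (γ ^ m) (S.repr.symm y M) := by
  rw [← S.repr.apply_symm_apply y, repr_symm_mul_repr_apply, AddEquiv.apply_symm_apply,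
    Finsupp.sum, Finset.sum_eq_single_of_mem M hy.1, add_sub_cancel_right]
  intro j hj hjM
  have hxz : S.repr.symm x (m + M - j) = 0 :=
    Finsupp.notMem_support_iff.mp fun h => by have := hx.2 h; have := hy.2 hj; omega
  rw [hxz, zero_mul]

theorem deg_le_deg_mul {x y : R} (hx : x ≠ 0) (hy : y ≠ 0) : S.deg x ≤ S.deg (x * y) := by
  obtain ⟨m, n, hm, hn⟩ := S.exists_isLeast_isGreatest hx
  obtain ⟨M, N, hM, hN⟩ := S.exists_isLeast_isGreatest hy
  have htop : n + N ∈ (S.repr.symm (x * y)).support := by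
    rw [Finsupp.mem_support_iff, S.repr_symm_mul_apply_add_of_isGreatest hn hN]
    exact mul_ne_zero (Finsupp.mem_support_iff.mp hn.1)
      ((map_ne_zero _).mpr (Finsupp.mem_support_iff.mp hN.1))
  have hbot : m + M ∈ (S.repr.symm (x * y)).support := by
    rw [Finsupp.mem_support_iff, S.repr_symm_mul_apply_add_of_isLeast hm hM]
    exact mul_ne_zero (Finsupp.mem_support_iff.mp hm.1)
      ((map_ne_zero _).mpr (Finsupp.mem_support_iff.mp hM.1))
  rw [S.deg_eq_sub hm hn]
  linarith [S.sub_le_deg htop hbot, hM.2 hN.1]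

section RightModule

variable [Module Kᵐᵒᵖ R]

theorem smul_t_zpow (hS : ∀ (a : Kᵐᵒᵖ) (x : R), a • x = x * S.ι a.unop) (a : Kᵐᵒᵖ) (i : ℤ) :
    a • ((S.t ^ i : Rˣ) : R) = S.repr (single i ((γ ^ i) a.unop)) := by
  rw [hS, (S.semiconjBy_t_zpow i a.unop).eq, S.repr_single]

theorem repr_single_eq_smul (hS : ∀ (a : Kᵐᵒᵖ) (x : R), a • x = x * S.ι a.unop) (i : ℤ) (a : K) :
    S.repr (single i a) = MulOpposite.op ((γ ^ i)⁻¹ a) • ((S.t ^ i : Rˣ) : R) := by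
  rw [S.smul_t_zpow hS, MulOpposite.unop_op, RingAut.inv_apply, RingEquiv.apply_symm_apply]

theorem linearIndependent_t_zpow (hS : ∀ (a : Kᵐᵒᵖ) (x : R), a • x = x * S.ι a.unop) :
    LinearIndependent Kᵐᵒᵖ fun i : ℤ => ((S.t ^ i : Rˣ) : R) := by
  rw [linearIndependent_iff']
  intro s g hg i hi
  simp_rw [S.smul_t_zpow hS, ← map_sum, AddEquivClass.map_eq_zero_iff] at hg
  have hgi := DFunLike.congr_fun hg i
  rw [Finsupp.finsetSum_apply, Finset.sum_eq_single_of_mem i hi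
    (fun j _ hji => single_eq_of_ne hji.symm), single_eq_same, Finsupp.zero_apply,
    map_eq_zero_iff _ (γ ^ i).injective] at hgi
  exact MulOpposite.unop_eq_zero_iff _ |>.mp hgi

theorem span_t_zpow_eq_top (hS : ∀ (a : Kᵐᵒᵖ) (x : R), a • x = x * S.ι a.unop) :
    ⊤ ≤ span Kᵐᵒᵖ (Set.range fun i : ℤ => ((S.t ^ i : Rˣ) : R)) := by
  rintro x -
  obtain ⟨v, rfl⟩ := S.repr.surjective x
  induction v using Finsupp.induction_linear with
  | zero => simp
  | add v w hv hw => rw [map_add]; exact add_mem hv hw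
  | single i a => rw [S.repr_single_eq_smul hS]; exact smul_mem _ _ (subset_span ⟨i, rfl⟩)

noncomputable def basis (hS : ∀ (a : Kᵐᵒᵖ) (x : R), a • x = x * S.ι a.unop) :
    Module.Basis ℤ Kᵐᵒᵖ R :=
  Module.Basis.mk (S.linearIndependent_t_zpow hS) (S.span_t_zpow_eq_top hS)

variable (hS : ∀ (a : Kᵐᵒᵖ) (x : R), a • x = x * S.ι a.unop)

theorem basis_apply (i : ℤ) : S.basis hS i = ((S.t ^ i : Rˣ) : R) :=
  Module.Basis.mk_apply _ _ _

theorem basis_repr_apply (x : R) (i : ℤ) :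
    (S.basis hS).repr x i = MulOpposite.op ((γ ^ i)⁻¹ (S.repr.symm x i)) := by
  obtain ⟨v, rfl⟩ := S.repr.surjective x
  induction v using Finsupp.induction_linear with
  | zero => simp
  | add v w hv hw => simp only [map_add, Finsupp.add_apply, hv, hw, MulOpposite.op_add]
  | single j a =>
    rw [AddEquiv.symm_apply_apply, S.repr_single_eq_smul hS, ← S.basis_apply hS, map_smul,
      Module.Basis.repr_self]
    by_cases h : j = i
    · subst h; simp
    · simp [h]

theorem support_basis_repr (x : R) :
    ((S.basis hS).repr x).support = (S.repr.symm x).support := by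
  ext i
  simp [basis_repr_apply]

theorem mem_support_basis_repr_mul_basis {x : R} {j k : ℤ} :
    k ∈ ((S.basis hS).repr (x * S.basis hS j)).support ↔ k - j ∈ (S.repr.symm x).support := by
  rw [support_basis_repr, basis_apply, Finsupp.mem_support_iff, Finsupp.mem_support_iff,
    repr_symm_mul_t_zpow_apply]

theorem mem_span_basis_Ico_of_map_mul_eq_zero {N : Type*} [AddCommGroup N] [Module Kᵐᵒᵖ N]
    (q : R →ₗ[Kᵐᵒᵖ] N) {f : R} (hq : ∀ r, q (f * r) = 0) {m n : ℤ}
    (hm : IsLeast ↑(S.repr.symm f).support m) (hn : IsGreatest ↑(S.repr.symm f).support n)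
    (k : ℤ) : q (S.basis hS k) ∈ span Kᵐᵒᵖ ((q ∘ S.basis hS) '' Set.Ico m n) := by
  induction h : (k - m).natAbs using Nat.strong_induction_on generalizing k with
  | _ d ih =>
  by_cases hk : k ∈ Set.Ico m n
  · exact subset_span ⟨k, hk, rfl⟩
  -- Shift `f` so that its leading term (if `n ≤ k`) or trailing term (if `k < m`) sits at `t ^ k`;
  -- every other term of the shift is then in `[m, n)` or closer to it than `k`.
  obtain ⟨j, hkj, hj⟩ : ∃ j, k - j ∈ (S.repr.symm f).support ∧
      ∀ l, l - j ∈ (S.repr.symm f).support → l ≠ k → l ∈ Set.Ico m n ∨ (l - m).natAbs < d := by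
    rw [Set.mem_Ico, not_and_or, not_le, not_lt] at hk
    rcases hk with hkm | hnk
    · refine ⟨k - m, by simpa using hm.1, fun l hl hlk => ?_⟩
      have := hm.2 hl; have := hn.2 hl; rw [Set.mem_Ico]; omega
    · refine ⟨k - n, by simpa using hn.1, fun l hl hlk => ?_⟩
      have := hm.2 hl; have := hn.2 hl; rw [Set.mem_Ico]; omega
  have hk := (S.basis hS).mem_span_image_erase_of_map_eq_zero q (hq (S.basis hS j))
    (Finsupp.mem_support_iff.mp ((S.mem_support_basis_repr_mul_basis hS).mpr hkj))
  refine span_le.mpr ?_ hk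
  rintro _ ⟨l, hl, rfl⟩
  obtain ⟨hlk, hl⟩ := Finset.mem_erase.mp hl
  rcases hj l ((S.mem_support_basis_repr_mul_basis hS).mp hl) hlk with hl | hl
  · exact subset_span ⟨l, hl, rfl⟩
  · exact ih _ hl l rfl

theorem disjoint_span_basis_Ico {f : R} (hf : f ≠ 0) {m n : ℤ}
    (hm : IsLeast ↑(S.repr.symm f).support m) (hn : IsGreatest ↑(S.repr.symm f).support n)
    {p : Submodule Kᵐᵒᵖ R} (hp : (p : Set R) = Set.range (f * ·)) :
    Disjoint (span Kᵐᵒᵖ (S.basis hS '' Set.Ico m n)) p := by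
  refine Submodule.disjoint_def.mpr fun x hx hxp => ?_
  rw [← SetLike.mem_coe, hp] at hxp
  obtain ⟨r, rfl⟩ := hxp
  dsimp only
  by_contra hfr
  have hr : r ≠ 0 := by rintro rfl; exact hfr (mul_zero f)
  rw [Module.Basis.mem_span_image, support_basis_repr] at hx
  have hlt := S.deg_lt_of_support_subset_Ico hfr hx
  have hle := S.deg_le_deg_mul hf hr
  rw [S.deg_eq_sub hm hn] at hle
  omega

end RightModule

theorem rank_quotient_eq [Module Kᵐᵒᵖ R] (hS : ∀ (a : Kᵐᵒᵖ) (x : R), a • x = x * S.ι a.unop)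
    {f : R} (hf : f ≠ 0) {m n : ℤ}
    (hm : IsLeast ↑(S.repr.symm f).support m) (hn : IsGreatest ↑(S.repr.symm f).support n)
    {p : Submodule Kᵐᵒᵖ R} (hp : (p : Set R) = Set.range (f * ·)) :
    Module.rank Kᵐᵒᵖ (R ⧸ p) = (n - m).toNat := by
  let v : Finset.Ico m n → R ⧸ p := p.mkQ ∘ S.basis hS ∘ Subtype.val
  have hIco : Set.range (Subtype.val : Finset.Ico m n → ℤ) = Set.Ico m n := by
    rw [Subtype.range_coe_subtype, Finset.setOfPred_mem, Finset.coe_Ico]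
  have hli : LinearIndependent Kᵐᵒᵖ v := by
    refine ((S.basis hS).linearIndependent.comp _ Subtype.val_injective).map ?_
    rw [ker_mkQ, Set.range_comp, hIco]
    exact S.disjoint_span_basis_Ico hS hf hm hn hp
  have hq : ∀ r, p.mkQ (f * r) = 0 := fun r =>
    (Submodule.Quotient.mk_eq_zero p).mpr (by rw [← SetLike.mem_coe, hp]; exact ⟨r, rfl⟩)
  have hsp : ⊤ ≤ span Kᵐᵒᵖ (Set.range v) :=
    calc ⊤ = span Kᵐᵒᵖ (Set.range (p.mkQ ∘ S.basis hS)) := by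
          rw [Set.range_comp, span_image, (S.basis hS).span_eq, Submodule.map_top, range_mkQ]
      _ ≤ span Kᵐᵒᵖ (Set.range v) := by
          rw [span_le]
          rintro _ ⟨k, rfl⟩
          rw [show Set.range v = (p.mkQ ∘ S.basis hS) '' Set.Ico m n by
            rw [← hIco, ← Set.range_comp]; rfl]
          exact S.mem_span_basis_Ico_of_map_mul_eq_zero hS p.mkQ hq hm hn k
  rw [rank_eq_card_basis (Module.Basis.mk hli hsp), Fintype.card_coe, Int.card_Ico]

end SkewLaurent

/-- For a nonzero `f` in the skew Laurent polynomial ring `K_γ[t^{±1}]`,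
the degree of `f` equals the dimension of `K_γ[t^{±1}] / f·K_γ[t^{±1}]` as a right
`K`-vector space (a right `K`-module, i.e. a left `Kᵐᵒᵖ`-module, via right
multiplication by elements of `K`). -/
theorem skewLaurent_deg_eq_rank_quotient
    (K : Type) [DivisionRing K] (γ : K ≃+* K) (R : Type) [Ring R]
    (S : SkewLaurent K γ R) (f : R) (hf : f ≠ 0) :
    letI : Module Kᵐᵒᵖ R := Module.compHom R (RingHom.op S.ι)
    ∀ p : Submodule Kᵐᵒᵖ R, (p : Set R) = Set.range (fun r : R => f * r) →
      Module.rank Kᵐᵒᵖ (R ⧸ p) = ((S.deg f).toNat : Cardinal) := by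
  let _ : Module Kᵐᵒᵖ R := Module.compHom R (RingHom.op S.ι)
  intro p hp
  obtain ⟨m, n, hm, hn⟩ := S.exists_isLeast_isGreatest hf
  rw [S.rank_quotient_eq (fun _ _ => rfl) hf hm hn hp, S.deg_eq_sub hm hn]
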